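/- arXiv:1808.00621 — 5 statements merged into one kernel-verified Lean document; each statement's English description precedes it below -/
import Mathlib

section
/- Suppose all point weights are uniform, w_x = 1 for every x, and n ≥ 2. Then the infimum over all tours S of MCost_∞(S) equals OPTTSP, and the infimum is attained; in particular, every tour S satisfies MCost_∞(S) ≥ OPTTSP, and the periodic tour that repeats an optimal TSP cycle forever satisfies MCost_∞(S) = OPTTSP. -/
open Filter Finset
open scoped ENNReal NNReal
attribute [local instance] Classical.propDecidable

/-- Total distance traveled by the tour `S` from step `t` to step `t'`. -/
noncomputable def tourDist {α : Type*} [MetricSpace α] (S : ℕ → α) (t t' : ℕ) : ℝ≥0∞ :=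
  ∑ τ ∈ Finset.Ico t t', edist (S τ) (S (τ + 1))

/-- `visitTime S x k` is `v_x(k)`: `v_x(0) = 0` and, for `k ≥ 1`, the `k`-th index `t ≥ 1`
with `S t = x`. -/
noncomputable def visitTime {α : Type*} (S : ℕ → α) (x : α) : ℕ → ℕ
  | 0 => 0
  | k + 1 => Nat.nth (fun t => 1 ≤ t ∧ S t = x) k

/-- The maximum absence length from `x` under `S`, `∞` if `x` is visited only finitely often. -/
noncomputable def PCostInf {α : Type*} [MetricSpace α] (S : ℕ → α) (x : α) : ℝ≥0∞ :=
  if {t | 1 ≤ t ∧ S t = x}.Infinite then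
    ⨆ k, tourDist S (visitTime S x k) (visitTime S x (k + 1))
  else ⊤

/-- The quadratic cost of point `x` under tour `S`. -/
noncomputable def PCost2 {α : Type*} [MetricSpace α] (S : ℕ → α) (x : α) : ℝ≥0∞ :=
  Filter.limsup (fun k =>
    (∑ k' ∈ Finset.range (k + 1),
      (tourDist S (visitTime S x k') (visitTime S x (k' + 1))) ^ 2) /
    tourDist S 0 (visitTime S x (k + 1))) Filter.atTop

noncomputable def MCostInf {α : Type*} [MetricSpace α] [Fintype α] (w : α → ℝ) (S : ℕ → α) :
    ℝ≥0∞ :=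
  ⨆ x : α, ENNReal.ofReal (w x) * PCostInf S x

noncomputable def MCost2 {α : Type*} [MetricSpace α] [Fintype α] (w : α → ℝ) (S : ℕ → α) :
    ℝ≥0∞ :=
  ⨆ x : α, ENNReal.ofReal (w x) * PCost2 S x

/-- A tour is periodic if it repeats with some period `m ≥ 1`. -/
def IsPeriodic {α : Type*} (S : ℕ → α) : Prop :=
  ∃ m : ℕ, 1 ≤ m ∧ ∀ t, S (t + m) = S t

/-- The optimum TSP value: the least total length of a Hamiltonian cycle on the `n` points. -/
noncomputable def OPTTSP (α : Type*) [MetricSpace α] (n : ℕ) [NeZero n] : ℝ≥0∞ :=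
  ⨅ σ : ZMod n ≃ α, ∑ i : ZMod n, edist (σ i) (σ (i + 1))

/-!
Lower bound: once every point has been visited, let `y` be the point whose next visit comes
last. The absence of `y` spanning that moment is a closed walk through all points; keeping only
the first visit to each point shortens it (triangle inequality) to a Hamiltonian cycle.
Upper bound: along the tour repeating a cycle `σ`, consecutive visits to a point are at most `n`
steps apart, and a window of at most `n` steps uses each edge of `σ` at most once.
-/

section ZModWindow

variable {n : ℕ}

lemma ZMod.sum_val_eq_sum_range [NeZero n] {M : Type*} [AddCommMonoid M] (F : ℕ → M) :
    ∑ i : ZMod n, F i.val = ∑ j ∈ range n, F j := by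
  obtain ⟨m, rfl⟩ := Nat.exists_eq_succ_of_ne_zero (NeZero.ne n)
  exact Fin.sum_univ_eq_sum_range F (m + 1)

lemma ZMod.exists_mem_Ioc_natCast_eq [NeZero n] (i : ZMod n) (a : ℕ) :
    ∃ t ∈ Set.Ioc a (a + n), (t : ZMod n) = i := by
  refine ⟨a + 1 + (i - ((a + 1 : ℕ) : ZMod n)).val, ⟨by omega, ?_⟩, ?_⟩
  · have := ZMod.val_lt (i - ((a + 1 : ℕ) : ZMod n))
    omega
  · push_cast [ZMod.natCast_zmod_val]
    ring

lemma ZMod.natCast_injOn_Ico (a : ℕ) :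
    Set.InjOn (Nat.cast : ℕ → ZMod n) (Set.Ico a (a + n)) := by
  intro s hs t ht hst
  rw [Set.mem_Ico] at hs ht
  refine ((ZMod.natCast_eq_natCast_iff s t n).mp hst).eq_of_abs_lt ?_
  rw [abs_sub_lt_iff]
  omega

lemma ZMod.sum_Ico_natCast_le [NeZero n] {M : Type*} [AddCommMonoid M] [PartialOrder M]
    [CanonicallyOrderedAdd M] (F : ZMod n → M) {a b : ℕ} (hb : b ≤ a + n) :
    ∑ τ ∈ Ico a b, F τ ≤ ∑ i, F i := by
  have hsub : (Ico a b : Set ℕ) ⊆ Set.Ico a (a + n) := by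
    rw [coe_Ico]
    exact Set.Ico_subset_Ico_right hb
  rw [← sum_image ((ZMod.natCast_injOn_Ico a).mono hsub)]
  exact sum_le_sum_of_subset (subset_univ _)

end ZModWindow

lemma Nat.exists_le_lt_succ_of_strictMono {v : ℕ → ℕ} (hv : StrictMono v) {t : ℕ}
    (ht : v 0 ≤ t) : ∃ k, v k ≤ t ∧ t < v (k + 1) := by
  have h : ∃ m, t < v m := ⟨t + 1, t.lt_succ_self.trans_le (hv.id_le _)⟩
  have hm : Nat.find h ≠ 0 := fun h0 => (Nat.find_spec h).not_ge (h0 ▸ ht)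
  refine ⟨Nat.find h - 1, not_lt.mp (Nat.find_min h (by omega)), ?_⟩
  rw [Nat.sub_add_cancel (Nat.pos_of_ne_zero hm)]
  exact Nat.find_spec h

section Visits

variable {α : Type*} (S : ℕ → α) {x : α}

lemma visitTime_succ_spec (hx : {t | 1 ≤ t ∧ S t = x}.Infinite) (k : ℕ) :
    S (visitTime S x (k + 1)) = x :=
  (Nat.nth_mem_of_infinite hx k).2

lemma visitTime_strictMono (hx : {t | 1 ≤ t ∧ S t = x}.Infinite) :
    StrictMono (visitTime S x) := by
  refine strictMono_nat_of_lt_succ fun k => ?_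
  cases k with
  | zero => exact (Nat.nth_mem_of_infinite hx 0).1
  | succ k => exact Nat.nth_strictMono hx k.lt_succ_self

lemma visitTime_succ_le (hx : {t | 1 ≤ t ∧ S t = x}.Infinite) {k t : ℕ}
    (hkt : visitTime S x k < t) (ht : S t = x) : visitTime S x (k + 1) ≤ t := by
  have hp : 1 ≤ t ∧ S t = x := ⟨by omega, ht⟩
  refine le_of_le_of_eq ((Nat.nth_le_nth hx).mpr ?_) (Nat.nth_count hp)
  cases k with
  | zero => exact Nat.zero_le _
  | succ k => exact (Nat.lt_nth_iff_count_lt hx).mpr hkt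

lemma exists_visitTime_cover [Fintype α] [Nonempty α]
    (hinf : ∀ x, {t | 1 ≤ t ∧ S t = x}.Infinite) :
    ∃ y k, ∀ x, ∃ t, visitTime S y (k + 1) ≤ t ∧ t < visitTime S y (k + 1 + 1) ∧ S t = x := by
  set t₀ := univ.sup fun x => visitTime S x 1
  choose k hk₀ hk₁ using fun x => Nat.exists_le_lt_succ_of_strictMono
    (visitTime_strictMono S (hinf x)) (Nat.zero_le t₀)
  obtain ⟨y, hy⟩ := Finite.exists_max fun x => visitTime S x (k x + 1)
  obtain ⟨j, hj⟩ : ∃ j, k y = j + 1 := Nat.exists_eq_succ_of_ne_zero fun h0 =>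
    (hk₁ y).not_ge (h0 ▸ le_sup (f := fun x => visitTime S x 1) (mem_univ y))
  refine ⟨y, j, fun x => ?_⟩
  rw [← hj]
  by_cases hxy : x = y
  · subst hxy
    exact ⟨_, le_rfl, visitTime_strictMono S (hinf x) (by omega),
      hj ▸ visitTime_succ_spec S (hinf x) j⟩
  · refine ⟨visitTime S x (k x + 1), (hk₀ y).trans (hk₁ x).le,
      (hy x).lt_of_ne fun h => hxy ?_, visitTime_succ_spec S (hinf x) _⟩
    rw [← visitTime_succ_spec S (hinf x) (k x), h, visitTime_succ_spec S (hinf y)]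

variable {S} [MetricSpace α]

lemma tourDist_visitTime_le_PCostInf (hx : {t | 1 ≤ t ∧ S t = x}.Infinite) (k : ℕ) :
    tourDist S (visitTime S x k) (visitTime S x (k + 1)) ≤ PCostInf S x := by
  rw [PCostInf, if_pos hx]
  exact le_iSup (fun k => tourDist S (visitTime S x k) (visitTime S x (k + 1))) k

end Visits

section ClosedWalk

variable {α : Type*} {n : ℕ} [NeZero n]

lemma exists_monotone_bijective_of_cover [Fintype α] (hcard : Fintype.card α = n) (S : ℕ → α)
    {a b : ℕ} (hcover : ∀ x, ∃ t, a ≤ t ∧ t < b ∧ S t = x) :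
    ∃ w : ℕ → ℕ, Monotone w ∧ w 0 = a ∧ w n = b ∧
      Function.Bijective fun i : ZMod n => S (w i.val) := by
  let f : α → ℕ := fun x => Nat.find (hcover x)
  have hf : ∀ x, a ≤ f x ∧ f x < b ∧ S (f x) = x := fun x => Nat.find_spec (hcover x)
  have hf_inj : Function.Injective f := fun x y h => by rw [← (hf x).2.2, h, (hf y).2.2]
  set T := univ.image f
  have hT : T.card = n := by rw [card_image_of_injective _ hf_inj, card_univ, hcard]
  have hfT : ∀ t ∈ T, f (S t) = t := by
    simp only [T, mem_image, mem_univ, true_and]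
    rintro _ ⟨x, rfl⟩
    rw [(hf x).2.2]
  have haT : a ∈ T := by
    have hfa : f (S a) = a :=
      le_antisymm (Nat.find_min' _ ⟨le_rfl, (hf (S a)).1.trans_lt (hf (S a)).2.1, rfl⟩)
        (hf (S a)).1
    exact hfa ▸ mem_image_of_mem f (mem_univ _)
  let e := T.orderEmbOfFin hT
  refine ⟨fun j => if h : j < n then e ⟨j, h⟩ else b, ?_, ?_, dif_neg (lt_irrefl n), ?_⟩
  · intro i j hij
    dsimp only
    split_ifs with hi hj hj
    · exact e.monotone (Fin.mk_le_mk.mpr hij)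
    · obtain ⟨x, -, hx⟩ := mem_image.mp (T.orderEmbOfFin_mem hT ⟨i, hi⟩)
      exact hx ▸ (hf x).2.1.le
    · omega
    · exact le_rfl
  · simp only [dif_pos (NeZero.pos n)]
    rw [orderEmbOfFin_zero hT (NeZero.pos n)]
    refine le_antisymm (min'_le _ _ haT) (le_min' _ _ _ fun t ht => ?_)
    obtain ⟨x, -, rfl⟩ := mem_image.mp ht
    exact (hf x).1
  · refine (Fintype.bijective_iff_injective_and_card _).mpr ⟨fun i j hij => ?_, by simp [hcard]⟩
    simp only [dif_pos (ZMod.val_lt _)] at hij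
    have := congrArg f hij
    rw [hfT _ (T.orderEmbOfFin_mem hT _), hfT _ (T.orderEmbOfFin_mem hT _)] at this
    exact ZMod.val_injective n (congrArg Fin.val (e.injective this))

variable [MetricSpace α]

lemma sum_edist_le_tourDist (S : ℕ → α) {w : ℕ → ℕ} (hw : Monotone w) (m : ℕ) :
    ∑ j ∈ range m, edist (S (w j)) (S (w (j + 1))) ≤ tourDist S (w 0) (w m) := by
  induction m with
  | zero => simp
  | succ m ih =>
    rw [sum_range_succ, tourDist, ← sum_Ico_consecutive _ (hw m.zero_le) (hw m.le_succ)]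
    exact add_le_add ih (edist_le_Ico_sum_edist S (hw m.le_succ))

lemma OPTTSP_le_sum_edist (z : ℕ → α) (hz : z n = z 0)
    (hbij : Function.Bijective fun i : ZMod n => z i.val) :
    OPTTSP α n ≤ ∑ j ∈ range n, edist (z j) (z (j + 1)) := by
  let σ := Equiv.ofBijective _ hbij
  calc OPTTSP α n ≤ ∑ i : ZMod n, edist (σ i) (σ (i + 1)) := iInf_le _ σ
    _ = ∑ i : ZMod n, edist (z i.val) (z ((i.val + 1) % n)) := by
      simp [σ, ZMod.val_add, ZMod.val_one_eq_one_mod]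
    _ = ∑ j ∈ range n, edist (z j) (z ((j + 1) % n)) :=
      ZMod.sum_val_eq_sum_range fun j => edist (z j) (z ((j + 1) % n))
    _ = ∑ j ∈ range n, edist (z j) (z (j + 1)) := by
      refine sum_congr rfl fun j hj => ?_
      obtain hj | hj : j + 1 < n ∨ j + 1 = n := by have := mem_range.mp hj; omega
      · rw [Nat.mod_eq_of_lt hj]
      · rw [hj, Nat.mod_self, hz]

lemma OPTTSP_le_tourDist_of_cover [Fintype α] (hcard : Fintype.card α = n) (S : ℕ → α)
    {a b : ℕ} (hSab : S a = S b) (hcover : ∀ x, ∃ t, a ≤ t ∧ t < b ∧ S t = x) :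
    OPTTSP α n ≤ tourDist S a b := by
  obtain ⟨w, hw, rfl, rfl, hbij⟩ := exists_monotone_bijective_of_cover hcard S hcover
  exact (OPTTSP_le_sum_edist (fun j => S (w j)) hSab.symm hbij).trans
    (sum_edist_le_tourDist S hw n)

lemma OPTTSP_le_iSup_PCostInf [Fintype α] (hcard : Fintype.card α = n) (S : ℕ → α) :
    OPTTSP α n ≤ ⨆ x, PCostInf S x := by
  by_cases hinf : ∀ x, {t | 1 ≤ t ∧ S t = x}.Infinite
  · have : Nonempty α := Fintype.card_pos_iff.mp (hcard ▸ NeZero.pos n)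
    obtain ⟨y, k, hcover⟩ := exists_visitTime_cover S hinf
    calc OPTTSP α n ≤ tourDist S (visitTime S y (k + 1)) (visitTime S y (k + 1 + 1)) :=
          OPTTSP_le_tourDist_of_cover hcard S
            (by rw [visitTime_succ_spec S (hinf y), visitTime_succ_spec S (hinf y)]) hcover
      _ ≤ PCostInf S y := tourDist_visitTime_le_PCostInf (hinf y) _
      _ ≤ ⨆ x, PCostInf S x := le_iSup _ y
  · obtain ⟨x, hx⟩ := not_forall.mp hinf
    calc OPTTSP α n ≤ PCostInf S x := by rw [PCostInf, if_neg hx]; exact le_top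
      _ ≤ ⨆ x, PCostInf S x := le_iSup _ x

end ClosedWalk

lemma PCostInf_cyclicTour_le {α : Type*} [MetricSpace α] {n : ℕ} [NeZero n] (σ : ZMod n ≃ α)
    (x : α) : PCostInf (fun t : ℕ => σ t) x ≤ ∑ i, edist (σ i) (σ (i + 1)) := by
  set S : ℕ → α := fun t => σ t
  have hvisit : ∀ a, ∃ t ∈ Set.Ioc a (a + n), S t = x := fun a => by
    obtain ⟨t, ht, hti⟩ := ZMod.exists_mem_Ioc_natCast_eq (σ.symm x) a
    exact ⟨t, ht, by simp [S, hti]⟩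
  have hx : {t | 1 ≤ t ∧ S t = x}.Infinite := Set.infinite_of_forall_exists_gt fun a => by
    obtain ⟨t, ⟨hat, -⟩, ht⟩ := hvisit a
    exact ⟨t, ⟨by omega, ht⟩, hat⟩
  rw [PCostInf, if_pos hx]
  refine iSup_le fun k => ?_
  obtain ⟨t, ⟨hkt, htn⟩, ht⟩ := hvisit (visitTime S x k)
  have hgap := visitTime_succ_le S hx hkt ht
  calc tourDist S (visitTime S x k) (visitTime S x (k + 1))
      = ∑ τ ∈ Ico (visitTime S x k) (visitTime S x (k + 1)),
          (fun i => edist (σ i) (σ (i + 1))) (τ : ZMod n) := by simp [tourDist, S]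
    _ ≤ ∑ i, edist (σ i) (σ (i + 1)) :=
      ZMod.sum_Ico_natCast_le (fun i => edist (σ i) (σ (i + 1))) (hgap.trans htn)

theorem stmt0_general {α : Type*} [MetricSpace α] [Fintype α] (n : ℕ) [NeZero n]
    (hcard : Fintype.card α = n) (w : α → ℝ) (hw : ∀ x, w x = 1) :
    (⨅ S : ℕ → α, MCostInf w S) = OPTTSP α n ∧
    (∀ S : ℕ → α, OPTTSP α n ≤ MCostInf w S) ∧
    (∃ σ : ZMod n ≃ α,
      (∑ i : ZMod n, edist (σ i) (σ (i + 1))) = OPTTSP α n ∧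
      MCostInf w (fun t : ℕ => σ ((t : ℕ) : ZMod n)) = OPTTSP α n) := by
  have hM : ∀ S : ℕ → α, MCostInf w S = ⨆ x, PCostInf S x := fun S => by
    simp only [MCostInf, hw, ENNReal.ofReal_one, one_mul]
  have hlow : ∀ S : ℕ → α, OPTTSP α n ≤ MCostInf w S := fun S =>
    hM S ▸ OPTTSP_le_iSup_PCostInf hcard S
  have : Nonempty (ZMod n ≃ α) := ⟨Fintype.equivOfCardEq (by rw [ZMod.card, hcard])⟩
  obtain ⟨σ, hσ⟩ : ∃ σ : ZMod n ≃ α, ∑ i, edist (σ i) (σ (i + 1)) = OPTTSP α n :=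
    exists_eq_ciInf_of_finite
  have hcyc : MCostInf w (fun t : ℕ => σ t) = OPTTSP α n := by
    refine le_antisymm ?_ (hlow _)
    rw [hM, ← hσ]
    exact iSup_le (PCostInf_cyclicTour_le σ)
  exact ⟨le_antisymm (hcyc ▸ iInf_le _ _) (le_iInf hlow), hlow, σ, hσ, hcyc⟩

/-- With uniform weights `w ≡ 1` and `n ≥ 2` points, the infimum over all
tours of the weighted Max-TSP objective equals `OPTTSP` and is attained; in particular every
tour has objective at least `OPTTSP`, and the periodic tour repeating an optimal TSP cycle
achieves exactly `OPTTSP`. -/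
theorem stmt0 {α : Type*} [MetricSpace α] [Fintype α] (n : ℕ) [NeZero n]
    (hn : 2 ≤ n) (hcard : Fintype.card α = n) (w : α → ℝ) (hw : ∀ x, w x = 1) :
    (⨅ S : ℕ → α, MCostInf w S) = OPTTSP α n ∧
    (∀ S : ℕ → α, OPTTSP α n ≤ MCostInf w S) ∧
    (∃ σ : ZMod n ≃ α,
      (∑ i : ZMod n, edist (σ i) (σ (i + 1))) = OPTTSP α n ∧
      MCostInf w (fun t : ℕ => σ ((t : ℕ) : ZMod n)) = OPTTSP α n) :=
  stmt0_general n hcard w hw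
end

section
/- Let G = (V, E) be a finite undirected graph with nonnegative edge weights, let K ≥ 1, let 0 ≤ γ < 1/2 and C > 0, and let E_1, …, E_K ⊆ E be connected edge sets with c(E_i) < C for every i. Assume every vertex of G is an endpoint of an edge in at least (1−γ)·K of the sets E_i. Then G has a spanning tree of total cost strictly less than (2/(1−2γ))·C. -/
open Finset SimpleGraph

attribute [local instance] Classical.propDecidable

/-- An edge set `F` is connected if the subgraph formed by the edges of `F` together with
their endpoints is connected, i.e., any two vertices touched by `F` are joined by a path
using only edges of `F`. -/
def EdgesConnected {V : Type*} (F : Set (Sym2 V)) : Prop :=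
  ∀ u v : V, (∃ e ∈ F, u ∈ e) → (∃ e ∈ F, v ∈ e) →
    (SimpleGraph.fromEdgeSet F).Reachable u v

/-!
Put `m e := #{i | e ∈ E i} / ((1 - 2γ) K)`. Two vertices `u, v` are both touched by at least
`(1 - 2γ) K` of the sets `E i`, and each such connected set crosses every cut separating `u`
from `v`; hence `m` is a fractional cover of all cuts of `V`. Any fractional cut cover `m`
yields a spanning tree of cost at most `2 ∑ m e w e` by a primal-dual argument: when the
current graph has `c` components, the `c` component cuts carry total `m`-weight at least `c`
and every edge lies in at most two of them, so `c` copies of the cheapest crossing weight are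
paid for by `2 ∑ m e w e`; buy that edge, lower the crossing weights by it and recurse.
Finally `∑ m e w e = ∑ i c(E i) / ((1 - 2γ) K) < C / (1 - 2γ)`.
-/

section

variable {V : Type*}

noncomputable def cutEdges [Fintype V] (S : Set V) : Finset (Sym2 V) :=
  {e | ∃ a ∈ S, ∃ b ∉ S, s(a, b) = e}

@[simp]
lemma mk_mem_cutEdges [Fintype V] {S : Set V} {a b : V} :
    s(a, b) ∈ cutEdges S ↔ a ∈ S ∧ b ∉ S ∨ b ∈ S ∧ a ∉ S := by
  simp only [cutEdges, mem_filter, mem_univ, true_and, Sym2.eq_iff]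
  constructor
  · rintro ⟨x, hx, y, hy, ⟨rfl, rfl⟩ | ⟨rfl, rfl⟩⟩
    exacts [Or.inl ⟨hx, hy⟩, Or.inr ⟨hx, hy⟩]
  · rintro (⟨ha, hb⟩ | ⟨hb, ha⟩)
    exacts [⟨a, ha, b, hb, Or.inl ⟨rfl, rfl⟩⟩, ⟨b, hb, a, ha, Or.inr ⟨rfl, rfl⟩⟩]

noncomputable def lowerOn (X : Finset (Sym2 V)) (t : ℝ) (w : Sym2 V → ℝ) : Sym2 V → ℝ :=
  fun e => if e ∈ X then w e - t else w e

lemma sum_eq_sum_lowerOn_add {X F : Finset (Sym2 V)} (hF : F ⊆ X) (t : ℝ) (w : Sym2 V → ℝ) :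
    ∑ e ∈ F, w e = ∑ e ∈ F, lowerOn X t w e + #F * t := by
  rw [sum_congr rfl fun e he => show w e = lowerOn X t w e + t by simp [lowerOn, hF he],
    sum_add_distrib, sum_const, nsmul_eq_mul]

lemma sum_mul_eq_sum_mul_lowerOn_add {X Y : Finset (Sym2 V)} {m : Sym2 V → ℝ}
    (hm : ∀ e ∈ Y, e ∉ X → m e = 0) (t : ℝ) (w : Sym2 V → ℝ) :
    ∑ e ∈ Y, m e * w e = ∑ e ∈ Y, m e * lowerOn X t w e + (∑ e ∈ Y, m e) * t := by
  rw [sum_mul, ← sum_add_distrib]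
  refine sum_congr rfl fun e he => ?_
  by_cases heX : e ∈ X
  · simp only [lowerOn, if_pos heX]
    ring
  · simp [hm e he heX]

lemma sum_insert_le_two_mul_sum_of_lowerOn {X Y F : Finset (Sym2 V)} {m w : Sym2 V → ℝ}
    {e₀ : Sym2 V} (he₀ : e₀ ∉ F) (hFX : F ⊆ X) (hm : ∀ e ∈ Y, e ∉ X → m e = 0)
    (hw₀ : 0 ≤ w e₀) (hcard : (#F + 1 : ℝ) ≤ 2 * ∑ e ∈ Y, m e)
    (hF : ∑ e ∈ F, lowerOn X (w e₀) w e ≤ 2 * ∑ e ∈ Y, m e * lowerOn X (w e₀) w e) :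
    ∑ e ∈ insert e₀ F, w e ≤ 2 * ∑ e ∈ Y, m e * w e := by
  calc ∑ e ∈ insert e₀ F, w e
      = (#F + 1) * w e₀ + ∑ e ∈ F, lowerOn X (w e₀) w e := by
        rw [sum_insert he₀, sum_eq_sum_lowerOn_add hFX (w e₀)]
        ring
    _ ≤ 2 * (∑ e ∈ Y, m e) * w e₀ + 2 * ∑ e ∈ Y, m e * lowerOn X (w e₀) w e := by
      gcongr
    _ = 2 * ∑ e ∈ Y, m e * w e := by
      rw [sum_mul_eq_sum_mul_lowerOn_add hm (w e₀) w]
      ring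

namespace SimpleGraph

def crossingEdges (H : SimpleGraph V) : Set (Sym2 V) :=
  Sym2.fromRel (r := fun a b => ¬ H.Reachable a b) ⟨fun _ _ h h' => h h'.symm⟩

@[simp]
lemma mk_mem_crossingEdges {H : SimpleGraph V} {a b : V} :
    s(a, b) ∈ H.crossingEdges ↔ ¬ H.Reachable a b :=
  Sym2.fromRel_prop

lemma crossingEdges_anti {H H' : SimpleGraph V} (h : H ≤ H') :
    H'.crossingEdges ⊆ H.crossingEdges := by
  intro e
  induction e using Sym2.ind with
  | _ a b => simpa using mt (Reachable.mono h)

lemma reachable_sup_edge (H : SimpleGraph V) (a b : V) : (H ⊔ edge a b).Reachable a b := by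
  rcases eq_or_ne a b with rfl | hne
  · exact Reachable.refl a
  · exact Adj.reachable (Or.inr ((edge_adj a b a b).2 ⟨by simp, hne⟩))

lemma card_connectedComponent_sup_edge_lt [Finite V] {H : SimpleGraph V} {a b : V}
    (hab : ¬ H.Reachable a b) :
    Nat.card (H ⊔ edge a b).ConnectedComponent < Nat.card H.ConnectedComponent := by
  have : Fintype V := Fintype.ofFinite V
  simp only [Nat.card_eq_fintype_card]
  refine Fintype.card_lt_of_surjective_not_injective _
    (ConnectedComponent.surjective_map_ofLE le_sup_left) fun hinj => hab ?_
  exact ConnectedComponent.exact (@hinj (H.connectedComponentMk a) (H.connectedComponentMk b)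
    (ConnectedComponent.sound (reachable_sup_edge H a b)))

lemma mk_notMem_crossingEdges_sup_edge (H : SimpleGraph V) (a b : V) :
    s(a, b) ∉ (H ⊔ edge a b).crossingEdges := by
  simpa using reachable_sup_edge H a b

variable [Fintype V]

/-- `m` covers fractionally every cut of the graph obtained by contracting the components
of `H`. -/
def CoversCuts (H : SimpleGraph V) (m : Sym2 V → ℝ) : Prop :=
  ∀ S : Set V, S.Nonempty → S ≠ Set.univ → (∀ a b, H.Adj a b → (a ∈ S ↔ b ∈ S)) →
    1 ≤ ∑ e ∈ cutEdges S, m e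

lemma CoversCuts.mono {H H' : SimpleGraph V} {m : Sym2 V → ℝ} (hcov : H.CoversCuts m)
    (h : H ≤ H') : H'.CoversCuts m :=
  fun S hne hne' hS => hcov S hne hne' fun a b hab => hS a b (h hab)

lemma one_le_sum_cutEdges_supp {H : SimpleGraph V} {m : Sym2 V → ℝ} (hcov : H.CoversCuts m)
    (h1 : 1 < Nat.card H.ConnectedComponent) (c : H.ConnectedComponent) :
    1 ≤ ∑ e ∈ cutEdges c.supp, m e := by
  have := Finite.one_lt_card_iff_nontrivial.1 h1
  obtain ⟨c', hc'⟩ := exists_ne c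
  refine hcov _ c.nonempty_supp (fun h => hc' ?_) fun a b hab => ?_
  · obtain ⟨v, rfl⟩ := c'.exists_rep
    exact (ConnectedComponent.mem_supp_iff _ _).1 (h ▸ Set.mem_univ v)
  · simp only [ConnectedComponent.mem_supp_iff,
      ConnectedComponent.connectedComponentMk_eq_of_adj hab]

lemma card_connectedComponent_le_two_mul_sum {H : SimpleGraph V} {m : Sym2 V → ℝ}
    (hm : ∀ e, 0 ≤ m e) (hcov : H.CoversCuts m) (h1 : 1 < Nat.card H.ConnectedComponent) :
    (Nat.card H.ConnectedComponent : ℝ) ≤ 2 * ∑ e ∈ H.crossingEdges.toFinset, m e := by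
  have hcross : ∀ (c : H.ConnectedComponent) e, e ∈ cutEdges c.supp ↔
      e ∈ H.crossingEdges.toFinset ∧ e ∈ cutEdges c.supp := by
    intro c e
    refine ⟨fun he => ⟨?_, he⟩, And.right⟩
    induction e using Sym2.ind with
    | _ a b =>
      simp only [mk_mem_cutEdges, ConnectedComponent.mem_supp_iff] at he
      rw [Set.mem_toFinset, mk_mem_crossingEdges, ← ConnectedComponent.eq]
      rcases he with ⟨rfl, h⟩ | ⟨rfl, h⟩
      exacts [Ne.symm h, h]
  have htwo : ∀ e, #({c | e ∈ cutEdges c.supp} : Finset H.ConnectedComponent) ≤ 2 := by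
    intro e
    induction e using Sym2.ind with
    | _ a b =>
      refine (card_le_card fun c hc => ?_).trans (card_le_two (a := H.connectedComponentMk a)
        (b := H.connectedComponentMk b))
      simp only [mem_filter, mem_univ, true_and, mk_mem_cutEdges,
        ConnectedComponent.mem_supp_iff] at hc
      simp only [mem_insert, mem_singleton]
      tauto
  calc (Nat.card H.ConnectedComponent : ℝ)
      = ∑ _c : H.ConnectedComponent, (1 : ℝ) := by simp [Nat.card_eq_fintype_card]
    _ ≤ ∑ c : H.ConnectedComponent, ∑ e ∈ cutEdges c.supp, m e :=
      sum_le_sum fun c _ => one_le_sum_cutEdges_supp hcov h1 c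
    _ = ∑ e ∈ H.crossingEdges.toFinset, ∑ c ∈ {c | e ∈ cutEdges c.supp}, m e :=
      sum_comm' fun c e => by
        simp only [mem_univ, true_and, mem_filter]
        exact (hcross c e).trans and_comm
    _ ≤ ∑ e ∈ H.crossingEdges.toFinset, 2 * m e := by
      gcongr with e
      rw [sum_const, nsmul_eq_mul]
      gcongr
      · exact hm e
      · exact_mod_cast htwo e
    _ = 2 * ∑ e ∈ H.crossingEdges.toFinset, m e := (mul_sum ..).symm

lemma connected_of_card_connectedComponent_le_one [Nonempty V] {H : SimpleGraph V}
    (h : Nat.card H.ConnectedComponent ≤ 1) : H.Connected :=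
  have := Finite.card_le_one_iff_subsingleton.1 h
  Connected.mk fun _ _ => ConnectedComponent.exact (Subsingleton.elim _ _)

lemma CoversCuts.exists_cheapest_crossing_edge {m : Sym2 V → ℝ} (hm : ∀ e, 0 ≤ m e)
    {H : SimpleGraph V} (hcov : H.CoversCuts m) (h1 : 1 < Nat.card H.ConnectedComponent)
    (w : Sym2 V → ℝ) :
    ∃ a b, ¬ H.Reachable a b ∧ m s(a, b) ≠ 0 ∧
      ∀ e ∈ H.crossingEdges, m e ≠ 0 → w s(a, b) ≤ w e := by
  set X := H.crossingEdges.toFinset.filter (m · ≠ 0)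
  have hX : X.Nonempty := by
    have hcount := card_connectedComponent_le_two_mul_sum hm hcov h1
    obtain ⟨e, he, hme⟩ := exists_ne_zero_of_sum_ne_zero (f := m)
      (by linarith [show (1 : ℝ) < Nat.card H.ConnectedComponent by exact_mod_cast h1])
    exact ⟨e, mem_filter.2 ⟨he, hme⟩⟩
  obtain ⟨e₀, he₀X, hmin⟩ := X.exists_min_image w hX
  induction e₀ using Sym2.ind with
  | _ a b =>
    simp only [X, mem_filter, Set.mem_toFinset, mk_mem_crossingEdges] at he₀X
    exact ⟨a, b, he₀X.1, he₀X.2, fun e he hme => hmin e (by simp [X, he, hme])⟩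

theorem CoversCuts.exists_connecting_edges [Nonempty V] {m : Sym2 V → ℝ} (hm : ∀ e, 0 ≤ m e)
    {H : SimpleGraph V} (hcov : H.CoversCuts m) (w : Sym2 V → ℝ) (hw : ∀ e, 0 ≤ w e) :
    ∃ F : Finset (Sym2 V), (∀ e ∈ F, m e ≠ 0 ∧ e ∈ H.crossingEdges) ∧
      #F + 1 ≤ Nat.card H.ConnectedComponent ∧ (H ⊔ fromEdgeSet F).Connected ∧
      ∑ e ∈ F, w e ≤ 2 * ∑ e ∈ H.crossingEdges.toFinset, m e * w e := by
  induction hn : Nat.card H.ConnectedComponent using Nat.strong_induction_on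
    generalizing H w with
  | _ n ih =>
  subst hn
  by_cases h1 : Nat.card H.ConnectedComponent ≤ 1
  · refine ⟨∅, by simp, by rw [card_empty]; exact Nat.card_pos, ?_, ?_⟩
    · simpa using connected_of_card_connectedComponent_le_one h1
    · simpa using sum_nonneg fun e _ => mul_nonneg (hm e) (hw e)
  push Not at h1
  obtain ⟨a, b, hab, hmab, hmin⟩ := hcov.exists_cheapest_crossing_edge hm h1 w
  set Y := H.crossingEdges.toFinset
  set X := Y.filter (m · ≠ 0)
  have hlt := card_connectedComponent_sup_edge_lt hab
  set w' := lowerOn X (w s(a, b)) w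
  have hw' : ∀ e, 0 ≤ w' e := fun e => by
    by_cases he : e ∈ X
    · have hY := mem_filter.1 he
      simpa [w', lowerOn, he] using hmin e (Set.mem_toFinset.1 hY.1) hY.2
    · simpa [w', lowerOn, he] using hw e
  obtain ⟨F', hF', hF'card, hF'conn, hF'cost⟩ := ih _ hlt (hcov.mono le_sup_left) w' hw' rfl
  have hF'X : F' ⊆ X := fun e he => mem_filter.2
    ⟨Set.mem_toFinset.2 (crossingEdges_anti le_sup_left (hF' e he).2), (hF' e he).1⟩
  have hnotin : s(a, b) ∉ F' := fun h => mk_notMem_crossingEdges_sup_edge H a b (hF' _ h).2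
  refine ⟨insert s(a, b) F', fun e he => ?_, ?_, ?_, ?_⟩
  · rcases mem_insert.1 he with rfl | he
    · exact ⟨hmab, mk_mem_crossingEdges.2 hab⟩
    · simpa [X, Y, and_comm] using hF'X he
  · rw [card_insert_of_notMem hnotin]
    omega
  · rwa [coe_insert, Set.insert_eq, fromEdgeSet_union, ← sup_assoc]
  have hcard : (#F' + 1 : ℝ) ≤ 2 * ∑ e ∈ Y, m e :=
    le_trans (mod_cast (by omega : #F' + 1 ≤ Nat.card H.ConnectedComponent))
      (card_connectedComponent_le_two_mul_sum hm hcov h1)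
  refine sum_insert_le_two_mul_sum_of_lowerOn hnotin hF'X
    (fun e he heX => by simpa [X, he] using heX) (hw _) hcard (hF'cost.trans ?_)
  gcongr
  · exact fun e _ _ => mul_nonneg (hm e) (hw' e)
  · exact Set.toFinset_subset_toFinset.2 (crossingEdges_anti le_sup_left)

theorem CoversCuts.exists_isTree [Nonempty V] {m : Sym2 V → ℝ} (hm : ∀ e, 0 ≤ m e)
    (hcov : (⊥ : SimpleGraph V).CoversCuts m) (w : Sym2 V → ℝ) (hw : ∀ e, 0 ≤ w e) :
    ∃ T : SimpleGraph V, T.edgeSet ⊆ {e | m e ≠ 0} ∧ T.IsTree ∧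
      ∑ e ∈ T.edgeSet.toFinite.toFinset, w e ≤ 2 * ∑ e, m e * w e := by
  obtain ⟨F, hF, -, hconn, hcost⟩ := hcov.exists_connecting_edges hm w hw
  rw [bot_sup_eq] at hconn
  obtain ⟨T, hTF, hT⟩ := hconn.exists_isTree_le
  have hTF' : T.edgeSet ⊆ F := (le_fromEdgeSet_iff ..).1 hTF
  refine ⟨T, fun e he => (hF e (hTF' he)).1, hT, ?_⟩
  calc ∑ e ∈ T.edgeSet.toFinite.toFinset, w e
      ≤ ∑ e ∈ F, w e :=
        sum_le_sum_of_subset_of_nonneg (fun e he => hTF' (by simpa using he)) fun e _ _ => hw e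
    _ ≤ 2 * ∑ e ∈ (⊥ : SimpleGraph V).crossingEdges.toFinset, m e * w e := hcost
    _ ≤ 2 * ∑ e, m e * w e := by
      gcongr
      · exact fun e _ _ => mul_nonneg (hm e) (hw e)
      · exact subset_univ _

end SimpleGraph

section EdgeSetFamily

variable [Fintype V] {ι : Type*} [Fintype ι] {E : ι → Set (Sym2 V)}

lemma card_add_card_le_card_filter_and_add (p q : ι → Prop) [DecidablePred p]
    [DecidablePred q] :
    #{i | p i} + #{i | q i} ≤ #{i | p i ∧ q i} + Fintype.card ι := by
  rw [filter_and, ← card_union_add_card_inter, add_comm]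
  exact Nat.add_le_add_left (card_le_univ _) _

lemma le_card_touching_both {γ : ℝ}
    (hcover : ∀ v, (1 - γ) * Fintype.card ι ≤ #{i | ∃ e ∈ E i, v ∈ e}) (u v : V) :
    (1 - 2 * γ) * Fintype.card ι ≤ #{i | (∃ e ∈ E i, u ∈ e) ∧ ∃ e ∈ E i, v ∈ e} := by
  have := card_add_card_le_card_filter_and_add (fun i => ∃ e ∈ E i, u ∈ e)
    (fun i => ∃ e ∈ E i, v ∈ e)
  have := (Nat.cast_le (α := ℝ)).2 this
  push_cast at this
  linarith [hcover u, hcover v]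

lemma card_touching_both_le_sum_cutEdges (hconn : ∀ i, EdgesConnected (E i)) {S : Set V}
    {u v : V} (hu : u ∈ S) (hv : v ∉ S) :
    #{i | (∃ e ∈ E i, u ∈ e) ∧ ∃ e ∈ E i, v ∈ e} ≤ ∑ e ∈ cutEdges S, #{i | e ∈ E i} := by
  refine (card_le_card fun i hi => ?_).trans card_biUnion_le
  obtain ⟨hui, hvi⟩ := (mem_filter.1 hi).2
  obtain ⟨p⟩ := hconn i u v hui hvi
  obtain ⟨d, -, hdS, hdS'⟩ := p.exists_boundary_dart S hu hv
  exact mem_biUnion.2 ⟨s(d.fst, d.snd), by simp [hdS, hdS'],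
    mem_filter.2 ⟨mem_univ _, ((fromEdgeSet_adj _).1 d.adj).1⟩⟩

lemma coversCuts_bot_of_le_card (hconn : ∀ i, EdgesConnected (E i)) {D : ℝ} (hD : 0 < D)
    (hboth : ∀ u v, D ≤ #{i | (∃ e ∈ E i, u ∈ e) ∧ ∃ e ∈ E i, v ∈ e}) :
    (⊥ : SimpleGraph V).CoversCuts fun e => #{i | e ∈ E i} / D := by
  intro S ⟨u, hu⟩ hS _
  obtain ⟨v, hv⟩ := (Set.ne_univ_iff_exists_notMem S).1 hS
  rw [← sum_div, one_le_div hD]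
  exact (hboth u v).trans (mod_cast card_touching_both_le_sum_cutEdges hconn hu hv)

lemma sum_card_mem_mul_eq_sum_sum (w : Sym2 V → ℝ) :
    ∑ e, #{i | e ∈ E i} * w e = ∑ i, ∑ e ∈ (E i).toFinite.toFinset, w e := by
  simp_rw [← nsmul_eq_mul, ← sum_const]
  exact sum_comm' fun e i => by simp

end EdgeSetFamily

end

theorem stmt3_general {V : Type*} [Fintype V] [Nonempty V] (G : SimpleGraph V) (w : Sym2 V → ℝ)
    (hw : ∀ e, 0 ≤ w e) (K : ℕ) (hK : 1 ≤ K) (γ C : ℝ) (hγ : γ < 1 / 2)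
    (E : Fin K → Set (Sym2 V)) (hsub : ∀ i, E i ⊆ G.edgeSet)
    (hconn : ∀ i, EdgesConnected (E i))
    (hcost : ∀ i, ∑ e ∈ (E i).toFinite.toFinset, w e < C)
    (hcover : ∀ v : V, ((1 - γ) * K : ℝ) ≤
      (Finset.univ.filter (fun i : Fin K => ∃ e ∈ E i, v ∈ e)).card) :
    ∃ T : SimpleGraph V, T ≤ G ∧ T.IsTree ∧
      ∑ e ∈ T.edgeSet.toFinite.toFinset, w e < 2 / (1 - 2 * γ) * C := by
  have hD : 0 < (1 - 2 * γ) * K := mul_pos (by linarith) (by exact_mod_cast hK)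
  have hboth := le_card_touching_both (E := E) (γ := γ) (by simpa using hcover)
  simp only [Fintype.card_fin] at hboth
  obtain ⟨T, hTsupp, hT, hTcost⟩ := (coversCuts_bot_of_le_card hconn hD hboth).exists_isTree
    (fun e => by positivity) w hw
  refine ⟨T, edgeSet_subset_edgeSet.1 fun e he => ?_, hT, ?_⟩
  · obtain ⟨i, hi⟩ : ∃ i, e ∈ E i := by
      simpa [filter_nonempty_iff] using (div_ne_zero_iff.1 (hTsupp he)).1
    exact hsub i hi
  have : Nonempty (Fin K) := ⟨⟨0, hK⟩⟩
  calc ∑ e ∈ T.edgeSet.toFinite.toFinset, w e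
      ≤ 2 * ∑ e, #{i | e ∈ E i} / ((1 - 2 * γ) * K) * w e := hTcost
    _ = 2 / ((1 - 2 * γ) * K) * ∑ i, ∑ e ∈ (E i).toFinite.toFinset, w e := by
      rw [← sum_card_mem_mul_eq_sum_sum, mul_sum, mul_sum]
      congr 1 with e
      ring
    _ < 2 / ((1 - 2 * γ) * K) * (K * C) := by
      gcongr
      simpa using sum_lt_sum_of_nonempty univ_nonempty fun i _ => hcost i
    _ = 2 / (1 - 2 * γ) * C := by
      field_simp

/-- If connected edge sets `E_1, …, E_K`, each of cost `< C`, are such that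
every vertex is covered by at least a `(1−γ)` fraction of them (`0 ≤ γ < 1/2`), then `G` has
a spanning tree of cost strictly less than `(2/(1−2γ))·C`. -/
theorem stmt3 {V : Type*} [Fintype V] [Nonempty V] (G : SimpleGraph V) (w : Sym2 V → ℝ)
    (hw : ∀ e, 0 ≤ w e) (K : ℕ) (hK : 1 ≤ K) (γ C : ℝ) (hγ0 : 0 ≤ γ) (hγ : γ < 1 / 2)
    (hC : 0 < C) (E : Fin K → Set (Sym2 V)) (hsub : ∀ i, E i ⊆ G.edgeSet)
    (hconn : ∀ i, EdgesConnected (E i))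
    (hcost : ∀ i, ∑ e ∈ (E i).toFinite.toFinset, w e < C)
    (hcover : ∀ v : V, ((1 - γ) * K : ℝ) ≤
      (Finset.univ.filter (fun i : Fin K => ∃ e ∈ E i, v ∈ e)).card) :
    ∃ T : SimpleGraph V, T ≤ G ∧ T.IsTree ∧
      ∑ e ∈ T.edgeSet.toFinite.toFinset, w e < 2 / (1 - 2 * γ) * C :=
  stmt3_general G w hw K hK γ C hγ E hsub hconn hcost hcover
end

section
/- For every tour S and every point x that S visits infinitely often, PCost_2(x,S) ≤ PCost_∞(x,S). Consequently, for every tour S that visits each point infinitely often, MCost_2(S) ≤ MCost_∞(S) for any choice of positive weights. -/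
open Filter Finset
open scoped ENNReal NNReal
attribute [local instance] Classical.propDecidable

/-! The gaps between consecutive visits to `x` partition `[0, v_x(k+1))`, so the denominator
in `PCost₂` is the sum of the gaps, and each squared gap is at most `PCost_∞` times the gap. -/

theorem ENNReal.sum_sq_div_sum_le_iSup {ι : Type*} (s : Finset ι) (f : ι → ℝ≥0∞) :
    (∑ i ∈ s, f i ^ 2) / ∑ i ∈ s, f i ≤ ⨆ i, f i := by
  have h : ∑ i ∈ s, f i ^ 2 ≤ (⨆ i, f i) * ∑ i ∈ s, f i := by
    rw [Finset.mul_sum]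
    gcongr with i
    rw [sq]
    exact mul_le_mul_left (le_iSup f i) _
  calc (∑ i ∈ s, f i ^ 2) / ∑ i ∈ s, f i
      ≤ (⨆ i, f i) * (∑ i ∈ s, f i) / ∑ i ∈ s, f i := ENNReal.div_le_div_right h _
    _ = (⨆ i, f i) * ((∑ i ∈ s, f i) / ∑ i ∈ s, f i) := mul_div_assoc ..
    _ ≤ ⨆ i, f i := mul_le_of_le_one_right' ENNReal.div_self_le_one

theorem tourDist_add {α : Type*} [MetricSpace α] (S : ℕ → α) {a b c : ℕ} (hab : a ≤ b)
    (hbc : b ≤ c) : tourDist S a b + tourDist S b c = tourDist S a c :=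
  Finset.sum_Ico_consecutive _ hab hbc

section visits

variable {α : Type*} (S : ℕ → α) (x : α)

theorem visitTime_le_succ (hx : {t | 1 ≤ t ∧ S t = x}.Infinite) (k : ℕ) :
    visitTime S x k ≤ visitTime S x (k + 1) := by
  cases k with
  | zero => exact Nat.zero_le _
  | succ k => exact ((Nat.nth_lt_nth hx).2 k.lt_succ_self).le

theorem tourDist_zero_visitTime_eq_sum [MetricSpace α] (hx : {t | 1 ≤ t ∧ S t = x}.Infinite)
    (k : ℕ) : tourDist S 0 (visitTime S x (k + 1)) =
      ∑ k' ∈ Finset.range (k + 1), tourDist S (visitTime S x k') (visitTime S x (k' + 1)) := by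
  induction k with
  | zero => simp [visitTime]
  | succ k ih =>
    rw [Finset.sum_range_succ, ← ih,
      tourDist_add S (Nat.zero_le _) (visitTime_le_succ S x hx (k + 1))]

theorem PCost2_le_PCostInf [MetricSpace α] (hx : {t | 1 ≤ t ∧ S t = x}.Infinite) :
    PCost2 S x ≤ PCostInf S x := by
  rw [PCostInf, if_pos hx]
  refine Filter.limsup_le_of_le (by isBoundedDefault) (Filter.Eventually.of_forall fun k => ?_)
  rw [tourDist_zero_visitTime_eq_sum S x hx]
  exact ENNReal.sum_sq_div_sum_le_iSup _ fun k => tourDist S (visitTime S x k) (visitTime S x (k + 1))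

end visits

theorem MCost2_le_MCostInf {α : Type*} [MetricSpace α] [Fintype α] (S : ℕ → α)
    (hS : ∀ x : α, {t | 1 ≤ t ∧ S t = x}.Infinite) (w : α → ℝ) : MCost2 w S ≤ MCostInf w S :=
  iSup_mono fun x => mul_le_mul_right (PCost2_le_PCostInf S x (hS x)) _

/-- For every point visited infinitely often, `PCost₂(x,S) ≤ PCost_∞(x,S)`;
consequently, if `S` visits each point infinitely often, `MCost₂(S) ≤ MCost_∞(S)` for any
positive weights. -/
theorem stmt6 {α : Type*} [MetricSpace α] [Fintype α] (S : ℕ → α) :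
    (∀ x : α, {t | 1 ≤ t ∧ S t = x}.Infinite → PCost2 S x ≤ PCostInf S x) ∧
    ((∀ x : α, {t | 1 ≤ t ∧ S t = x}.Infinite) →
      ∀ w : α → ℝ, (∀ x, 0 < w x) → MCost2 w S ≤ MCostInf w S) :=
  ⟨fun x => PCost2_le_PCostInf S x, fun hS w _ => MCost2_le_MCostInf S hS w⟩
end

section
/- Let (l_k)_{k≥0} be a sequence of nonnegative reals whose partial sums S_k = Σ_{i=0}^{k} l_i tend to infinity. If there exists ε > 0 such that l_k ≥ ε·S_{k−1} for infinitely many k ≥ 1, then limsup_{k→∞} (Σ_{i=0}^{k} l_i²)/S_k = ∞. -/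
/-!
Let `S = Σ_{i<k} l_i`. At an index `k` with `l_k ≥ ε S`, the whole partial sum `S + l_k` is at
most `(1 + ε)/ε · l_k`, while the sum of squares is at least `l_k²`; so the ratio is at least
`ε l_k/(1 + ε) ≥ ε² S/(1 + ε)`, which is unbounded along such `k` because `S → ∞`.
-/

open Filter Finset

theorem EReal.limsup_coe_eq_top_of_forall_frequently_le {α : Type*} {f : Filter α} {u : α → ℝ}
    (h : ∀ C : ℝ, ∃ᶠ a in f, C ≤ u a) : limsup (fun a => (u a : EReal)) f = ⊤ := by
  refine (EReal.eq_top_iff_forall_lt _).2 fun y => ?_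
  calc (y : EReal) < ((y + 1 : ℝ) : EReal) := EReal.coe_lt_coe_iff.2 (lt_add_one y)
    _ ≤ _ := le_limsup_of_frequently_le' ((h (y + 1)).mono fun _ ha => EReal.coe_le_coe_iff.2 ha)

theorem sq_mul_div_one_add_le_div_add {ε S x Q : ℝ} (hε : 0 < ε) (hS : 0 < S)
    (hx : ε * S ≤ x) (hQ : x ^ 2 ≤ Q) : ε ^ 2 * S / (1 + ε) ≤ Q / (S + x) := by
  have hx₀ : 0 < x := (mul_pos hε hS).trans_le hx
  have hsum : S + x ≤ x * (1 + ε) / ε := by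
    rw [le_div_iff₀ hε]
    linarith
  calc ε ^ 2 * S / (1 + ε) ≤ ε * x / (1 + ε) := by
        rw [sq, mul_assoc]
        gcongr
    _ = x ^ 2 / (x * (1 + ε) / ε) := by field_simp
    _ ≤ Q / (S + x) := div_le_div₀ ((sq_nonneg x).trans hQ) hQ (by positivity) hsum

theorem stmt7_general (l : ℕ → ℝ)
    (hdiv : Filter.Tendsto (fun k => ∑ i ∈ Finset.range (k + 1), l i)
      Filter.atTop Filter.atTop)
    (ε : ℝ) (hε : 0 < ε)
    (hinf : {k : ℕ | 1 ≤ k ∧ ε * (∑ i ∈ Finset.range k, l i) ≤ l k}.Infinite) :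
    Filter.limsup
      (fun k => (((∑ i ∈ Finset.range (k + 1), (l i) ^ 2) /
        (∑ i ∈ Finset.range (k + 1), l i) : ℝ) : EReal)) Filter.atTop = ⊤ := by
  have hS : Tendsto (fun k => ∑ i ∈ range k, l i) atTop atTop :=
    (tendsto_add_atTop_iff_nat 1).1 hdiv
  have hbound : Tendsto (fun k => ε ^ 2 * (∑ i ∈ range k, l i) / (1 + ε)) atTop atTop :=
    (hS.const_mul_atTop (by positivity)).atTop_div_const (by positivity)
  have hlarge : ∃ᶠ k in atTop, 1 ≤ k ∧ ε * ∑ i ∈ range k, l i ≤ l k :=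
    Nat.frequently_atTop_iff_infinite.2 hinf
  refine EReal.limsup_coe_eq_top_of_forall_frequently_le fun C => ?_
  refine (hlarge.and_eventually ((hS.eventually_gt_atTop 0).and
    (hbound.eventually_ge_atTop C))).mono fun k ⟨⟨_, hk⟩, hpos, hC⟩ => ?_
  rw [sum_range_succ (fun i => l i)]
  exact hC.trans <| sq_mul_div_one_add_le_div_add hε hpos hk
    (single_le_sum (fun i _ => sq_nonneg (l i)) (self_mem_range_succ k))

/-- If the partial sums `S_k = Σ_{i=0}^k l_i` of a nonnegative sequence tend
to infinity and there is `ε > 0` with `l_k ≥ ε·S_{k−1}` for infinitely many `k ≥ 1`, then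
`limsup_k (Σ_{i=0}^k l_i²)/S_k = ∞`. -/
theorem stmt7 (l : ℕ → ℝ) (hl : ∀ k, 0 ≤ l k)
    (hdiv : Filter.Tendsto (fun k => ∑ i ∈ Finset.range (k + 1), l i)
      Filter.atTop Filter.atTop)
    (ε : ℝ) (hε : 0 < ε)
    (hinf : {k : ℕ | 1 ≤ k ∧ ε * (∑ i ∈ Finset.range k, l i) ≤ l k}.Infinite) :
    Filter.limsup
      (fun k => (((∑ i ∈ Finset.range (k + 1), (l i) ^ 2) /
        (∑ i ∈ Finset.range (k + 1), l i) : ℝ) : EReal)) Filter.atTop = ⊤ :=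
  stmt7_general l hdiv ε hε hinf
end

section
/- Let G = (V, E) be a finite undirected graph with |V| ≥ 2, let K ≥ 1 and 0 ≤ γ < 1/2, and let E_1, …, E_K ⊆ E be connected edge sets such that every vertex of G is an endpoint of an edge in at least (1−γ)·K of the sets. For each edge e let v_e = |{i : e ∈ E_i}| / ((1−2γ)·K). Then for every nonempty proper subset A ⊊ V, the sum of v_e over all edges e with exactly one endpoint in A is at least 1 (i.e., the vector v is feasible for the fractional spanning-tree cut LP). -/
/-!
Fix `x ∈ A` and `y ∉ A`. At least `(1 - 2γ)K` of the sets `E i` touch both `x` and `y`, since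
each of the two vertices is missed by at most `γK` of them. Such an `E i` is connected, so it
contains a path from `x` to `y`, and that path crosses the cut `δ(A)`. Counting pairs `(e, i)`
with `e ∈ δ(A) ∩ E i` then gives `∑_{e ∈ δ(A)} |{i : e ∈ E i}| ≥ (1 - 2γ)K`.
-/

open Finset SimpleGraph

attribute [local instance] Classical.propDecidable

theorem EdgesConnected.exists_mem_cut {V : Type*} {F : Set (Sym2 V)} (hF : EdgesConnected F)
    {A : Set V} {x y : V} (hxA : x ∈ A) (hyA : y ∉ A) (hxF : ∃ e ∈ F, x ∈ e)
    (hyF : ∃ e ∈ F, y ∈ e) : ∃ u v : V, s(u, v) ∈ F ∧ u ∈ A ∧ v ∉ A := by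
  obtain ⟨p⟩ := hF x y hxF hyF
  obtain ⟨d, -, hdA⟩ := p.exists_boundary_dart A hxA hyA
  have hd : s(d.fst, d.snd) ∈ (fromEdgeSet F).edgeSet := d.adj
  rw [edgeSet_fromEdgeSet] at hd
  exact ⟨d.fst, d.snd, hd.1, hdA⟩

theorem Finset.card_add_card_le_card_inter_add_card {ι : Type*} [Fintype ι] [DecidableEq ι]
    (P Q : Finset ι) : #P + #Q ≤ #(P ∩ Q) + Fintype.card ι := by
  rw [← card_inter_add_card_union]
  exact Nat.add_le_add_left (card_le_univ _) _

theorem Finset.card_le_sum_card_filter_mem {ι α : Type*} [Fintype ι] (E : ι → Set α)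
    (T : Finset α) (S : Finset ι) (hS : ∀ i ∈ S, ∃ e ∈ T, e ∈ E i) :
    #S ≤ ∑ e ∈ T, #(univ.filter fun i => e ∈ E i) := by
  refine (card_le_card fun i hi => ?_).trans card_biUnion_le
  obtain ⟨e, heT, hei⟩ := hS i hi
  exact mem_biUnion.2 ⟨e, heT, mem_filter.2 ⟨mem_univ i, hei⟩⟩

theorem stmt10_general {V : Type*} [Fintype V] (G : SimpleGraph V)
    (K : ℕ) (hK : 1 ≤ K) (γ : ℝ) (hγ : γ < 1 / 2)
    (E : Fin K → Set (Sym2 V)) (hsub : ∀ i, E i ⊆ G.edgeSet)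
    (hconn : ∀ i, EdgesConnected (E i))
    (hcover : ∀ x : V, ((1 - γ) * K : ℝ) ≤
      (Finset.univ.filter (fun i : Fin K => ∃ e ∈ E i, x ∈ e)).card)
    (A : Set V) (hA : A.Nonempty) (hA' : A ≠ Set.univ) :
    1 ≤ ∑ e ∈ G.edgeSet.toFinite.toFinset.filter
        (fun e => ∃ u v : V, e = s(u, v) ∧ u ∈ A ∧ v ∉ A),
      ((Finset.univ.filter (fun i : Fin K => e ∈ E i)).card : ℝ) / ((1 - 2 * γ) * K) := by
  obtain ⟨x, hx⟩ := hA
  obtain ⟨y, hy⟩ := (Set.ne_univ_iff_exists_notMem A).1 hA'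
  set δA := G.edgeSet.toFinite.toFinset.filter fun e => ∃ u v : V, e = s(u, v) ∧ u ∈ A ∧ v ∉ A
  set P := univ.filter fun i : Fin K => ∃ e ∈ E i, x ∈ e
  set Q := univ.filter fun i : Fin K => ∃ e ∈ E i, y ∈ e
  have hPQ : ((1 - 2 * γ) * K : ℝ) ≤ #(P ∩ Q) := by
    have h := card_add_card_le_card_inter_add_card P Q
    rw [Fintype.card_fin] at h
    have h' : (#P : ℝ) + #Q ≤ #(P ∩ Q) + K := by exact_mod_cast h
    linarith [hcover x, hcover y]
  have hcut : #(P ∩ Q) ≤ ∑ e ∈ δA, #(univ.filter fun i => e ∈ E i) := by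
    refine card_le_sum_card_filter_mem E _ _ fun i hi => ?_
    obtain ⟨hxi, hyi⟩ := mem_inter.1 hi
    obtain ⟨u, v, huv, hu, hv⟩ :=
      (hconn i).exists_mem_cut hx hy (mem_filter.1 hxi).2 (mem_filter.1 hyi).2
    exact ⟨s(u, v), mem_filter.2 ⟨(Set.Finite.mem_toFinset _).2 (hsub i huv), u, v, rfl, hu, hv⟩,
      huv⟩
  have hD : (0 : ℝ) < (1 - 2 * γ) * K := mul_pos (by linarith) (by exact_mod_cast hK)
  rw [← sum_div, le_div_iff₀ hD, one_mul]
  exact hPQ.trans (by exact_mod_cast hcut)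

/-- The fractional vector `v_e = |{i : e ∈ E_i}| / ((1−2γ)·K)` is feasible
for the fractional spanning-tree cut LP: every nonempty proper cut carries total fractional
value at least 1. -/
theorem stmt10 {V : Type*} [Fintype V] (hV : 2 ≤ Fintype.card V) (G : SimpleGraph V)
    (K : ℕ) (hK : 1 ≤ K) (γ : ℝ) (hγ0 : 0 ≤ γ) (hγ : γ < 1 / 2)
    (E : Fin K → Set (Sym2 V)) (hsub : ∀ i, E i ⊆ G.edgeSet)
    (hconn : ∀ i, EdgesConnected (E i))
    (hcover : ∀ x : V, ((1 - γ) * K : ℝ) ≤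
      (Finset.univ.filter (fun i : Fin K => ∃ e ∈ E i, x ∈ e)).card)
    (A : Set V) (hA : A.Nonempty) (hA' : A ≠ Set.univ) :
    1 ≤ ∑ e ∈ G.edgeSet.toFinite.toFinset.filter
        (fun e => ∃ u v : V, e = s(u, v) ∧ u ∈ A ∧ v ∉ A),
      ((Finset.univ.filter (fun i : Fin K => e ∈ E i)).card : ℝ) / ((1 - 2 * γ) * K) :=
  stmt10_general G K hK γ hγ E hsub hconn hcover A hA hA'
end
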